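/- The Lie subring of M_2(ℍ) generated under the commutator bracket [x,y] = xy − yx by the set of all matrices a·E_{ij} with a ∈ ℍ and i ≠ j is a real linear subspace of M_2(ℍ) of real dimension 15. -/

import Mathlib

open scoped Quaternion

/-- The smallest additive subgroup containing `s` and closed under the
commutator bracket `x * y - y * x`. -/
def lieClosure {M : Type*} [NonUnitalNonAssocRing M] (s : Set M) : AddSubgroup M :=
  sInf {S : AddSubgroup M | s ⊆ S ∧ ∀ x ∈ S, ∀ y ∈ S, x * y - y * x ∈ S}

/-!
For `2 × 2` matrices over any ring `A`, the Lie ring generated by the off-diagonal matrices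
`a E₁₂`, `b E₂₁` consists exactly of the matrices whose trace is a sum of commutators in `A`:
`[a E₁₂, b E₂₁] = ab E₁₁ - ba E₂₂` yields `a E₁₁ - a E₂₂` and `(ab - ba) E₂₂`, while conversely
`tr (xy - yx)` is always a sum of commutators. In `ℍ` the sums of commutators are exactly the
pure quaternions, since `re (ab) = re (ba)` and `[j, k] = 2i` cyclically. Hence the Lie ring is
the kernel of the nonzero real functional `M ↦ re (tr M)` on the `16`-dimensional space `M₂(ℍ)`.
-/

open Matrix Module

section LieClosure

variable {M : Type*} [NonUnitalNonAssocRing M] {s : Set M}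

theorem subset_lieClosure : s ⊆ lieClosure s :=
  fun _ hx => AddSubgroup.mem_sInf.2 fun _ hS => hS.1 hx

theorem mul_sub_mul_mem_lieClosure {x y : M} (hx : x ∈ lieClosure s) (hy : y ∈ lieClosure s) :
    x * y - y * x ∈ lieClosure s :=
  AddSubgroup.mem_sInf.2 fun S hS =>
    hS.2 x (AddSubgroup.mem_sInf.1 hx S hS) y (AddSubgroup.mem_sInf.1 hy S hS)

theorem lieClosure_le {S : AddSubgroup M} (hs : s ⊆ S)
    (hS : ∀ x ∈ S, ∀ y ∈ S, x * y - y * x ∈ S) : lieClosure s ≤ S :=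
  sInf_le ⟨hs, hS⟩

end LieClosure

def commutatorAddSubgroup (α : Type*) [Ring α] : AddSubgroup α :=
  AddSubgroup.closure {x | ∃ a b : α, a * b - b * a = x}

theorem mul_sub_mul_mem_commutatorAddSubgroup {α : Type*} [Ring α] (a b : α) :
    a * b - b * a ∈ commutatorAddSubgroup α :=
  AddSubgroup.subset_closure ⟨a, b, rfl⟩

namespace Quaternion

variable {R : Type*}

theorem re_mul_comm [CommRing R] (a b : ℍ[R]) : (a * b).re = (b * a).re := by
  simp only [re_mul]; ring

theorem mem_commutatorAddSubgroup_iff [Field R] [NeZero (2 : R)] {c : ℍ[R]} :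
    c ∈ commutatorAddSubgroup ℍ[R] ↔ c.re = 0 := by
  refine ⟨fun hc => ?_, fun hc => ?_⟩
  · induction hc using AddSubgroup.closure_induction with
    | mem _ h => obtain ⟨a, b, rfl⟩ := h; rw [re_sub, re_mul_comm, sub_self]
    | zero => rfl
    | add _ _ _ _ ha hb => rw [re_add, ha, hb, add_zero]
    | neg _ _ ha => rw [re_neg, ha, neg_zero]
  · let q (x y z w : R) : ℍ[R] := ⟨x, y, z, w⟩
    -- `[j, k] = 2i`, `[k, i] = 2j`, `[i, j] = 2k`
    have key : c = (q 0 0 (c.imI / 2) 0 * q 0 0 0 1 - q 0 0 0 1 * q 0 0 (c.imI / 2) 0)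
        + (q 0 0 0 (c.imJ / 2) * q 0 1 0 0 - q 0 1 0 0 * q 0 0 0 (c.imJ / 2))
        + (q 0 (c.imK / 2) 0 0 * q 0 0 1 0 - q 0 0 1 0 * q 0 (c.imK / 2) 0 0) := by
      ext <;> simp only [re_add, re_sub, re_mul, imI_add, imI_sub, imI_mul, imJ_add, imJ_sub,
        imJ_mul, imK_add, imK_sub, imK_mul] <;> simp [q, hc]
    rw [key]
    exact add_mem (add_mem (mul_sub_mul_mem_commutatorAddSubgroup _ _)
      (mul_sub_mul_mem_commutatorAddSubgroup _ _)) (mul_sub_mul_mem_commutatorAddSubgroup _ _)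

end Quaternion

namespace Matrix

variable {n α : Type*}

def offDiagonalSingles (n α : Type*) [DecidableEq n] [Zero α] : Set (Matrix n n α) :=
  {x | ∃ (a : α) (i j : n), i ≠ j ∧ x = single i j a}

theorem trace_mul_sub_mul_mem_commutatorAddSubgroup [Fintype n] [Ring α] (x y : Matrix n n α) :
    trace (x * y - y * x) ∈ commutatorAddSubgroup α := by
  have h : trace (x * y - y * x) = ∑ i, ∑ j, (x i j * y j i - y j i * x i j) := by
    rw [trace_sub]
    simp only [trace, diag_apply, mul_apply, Finset.sum_sub_distrib]
    rw [Finset.sum_comm (f := fun i j => y i j * x j i)]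
  rw [h]
  exact sum_mem fun i _ => sum_mem fun j _ => mul_sub_mul_mem_commutatorAddSubgroup _ _

theorem lieClosure_offDiagonalSingles_le [DecidableEq n] [Fintype n] [Ring α] :
    lieClosure (offDiagonalSingles n α) ≤
      (commutatorAddSubgroup α).comap (traceAddMonoidHom n α) :=
  lieClosure_le (by rintro _ ⟨a, i, j, hij, rfl⟩; simp [trace_single_eq_of_ne _ _ _ hij])
    fun x _ y _ => trace_mul_sub_mul_mem_commutatorAddSubgroup x y

section TwoByTwo

variable [Ring α]

theorem single_mem_lieClosure_offDiagonalSingles {i j : Fin 2} (hij : i ≠ j) (a : α) :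
    single i j a ∈ lieClosure (offDiagonalSingles (Fin 2) α) :=
  subset_lieClosure ⟨a, i, j, hij, rfl⟩

theorem single_sub_single_mem_lieClosure_offDiagonalSingles (a : α) :
    single 0 0 a - single 1 1 a ∈ lieClosure (offDiagonalSingles (Fin 2) α) := by
  simpa using mul_sub_mul_mem_lieClosure (single_mem_lieClosure_offDiagonalSingles zero_ne_one a)
    (single_mem_lieClosure_offDiagonalSingles one_ne_zero 1)

theorem single_one_one_mem_lieClosure_offDiagonalSingles {c : α}
    (hc : c ∈ commutatorAddSubgroup α) :
    single 1 1 c ∈ lieClosure (offDiagonalSingles (Fin 2) α) := by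
  suffices commutatorAddSubgroup α ≤
      (lieClosure (offDiagonalSingles (Fin 2) α)).comap (singleAddMonoidHom 1 1) from this hc
  rw [commutatorAddSubgroup, AddSubgroup.closure_le]
  rintro _ ⟨a, b, rfl⟩
  have h := sub_mem
    (mul_sub_mul_mem_lieClosure (single_mem_lieClosure_offDiagonalSingles zero_ne_one a)
      (single_mem_lieClosure_offDiagonalSingles one_ne_zero b))
    (single_sub_single_mem_lieClosure_offDiagonalSingles (a * b))
  rw [SetLike.mem_coe, AddSubgroup.mem_comap, map_sub]
  simpa using h

theorem mem_lieClosure_offDiagonalSingles_iff (x : Matrix (Fin 2) (Fin 2) α) :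
    x ∈ lieClosure (offDiagonalSingles (Fin 2) α) ↔ x.trace ∈ commutatorAddSubgroup α := by
  refine ⟨fun hx => lieClosure_offDiagonalSingles_le hx, fun hx => ?_⟩
  have decomp : x = single 0 1 (x 0 1) + single 1 0 (x 1 0) +
      (single 0 0 (x 0 0) - single 1 1 (x 0 0)) + single 1 1 x.trace := by
    ext i j; fin_cases i <;> fin_cases j <;> simp [trace_fin_two]
  rw [decomp]
  exact add_mem (add_mem (add_mem (single_mem_lieClosure_offDiagonalSingles zero_ne_one _)
    (single_mem_lieClosure_offDiagonalSingles one_ne_zero _))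
    (single_sub_single_mem_lieClosure_offDiagonalSingles _))
    (single_one_one_mem_lieClosure_offDiagonalSingles hx)

end TwoByTwo

noncomputable def reTrace (n R : Type*) [Fintype n] [CommRing R] : Matrix n n ℍ[R] →ₗ[R] R where
  toFun x := x.trace.re
  map_add' x y := by simp [trace_add]
  map_smul' r x := by simp [trace_smul]

theorem reTrace_surjective (n R : Type*) [Fintype n] [Nonempty n] [CommRing R] :
    Function.Surjective (reTrace n R) := by
  classical
  exact fun r => ⟨single (Classical.arbitrary n) (Classical.arbitrary n) (r : ℍ[R]),
    by simp [reTrace]⟩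

theorem finrank_ker_reTrace (n R : Type*) [Fintype n] [Nonempty n] [Field R] :
    finrank R (LinearMap.ker (reTrace n R)) + 1 = 4 * Fintype.card n ^ 2 := by
  have h := LinearMap.finrank_range_add_finrank_ker (reTrace n R)
  rw [LinearMap.range_eq_top.2 (reTrace_surjective n R), finrank_top, finrank_self,
    finrank_matrix, Quaternion.finrank_eq_four] at h
  linarith

end Matrix

theorem sl2_quaternion_dimension :
    ∃ S : Submodule ℝ (Matrix (Fin 2) (Fin 2) ℍ[ℝ]),
      (S : Set (Matrix (Fin 2) (Fin 2) ℍ[ℝ])) =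
        (lieClosure {x : Matrix (Fin 2) (Fin 2) ℍ[ℝ] |
          ∃ (a : ℍ[ℝ]) (i j : Fin 2), i ≠ j ∧ x = Matrix.single i j a} :
            Set (Matrix (Fin 2) (Fin 2) ℍ[ℝ])) ∧
      Module.finrank ℝ S = 15 := by
  refine ⟨LinearMap.ker (reTrace (Fin 2) ℝ), ?_, ?_⟩
  · ext x
    exact ((mem_lieClosure_offDiagonalSingles_iff x).trans
      Quaternion.mem_commutatorAddSubgroup_iff).symm
  · have h := finrank_ker_reTrace (Fin 2) ℝ
    rw [Fintype.card_fin] at h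
    omega
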